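/- arXiv:1202.2410 — 2 statements merged into one kernel-verified Lean document; each statement's English description precedes it below -/
import Mathlib

section
/- Let n > 3, let c = (c_1,…,c_n) have all entries positive, and let c′ be the (n−1,n)-interchange of c. Then f(c′) − f(c) = (2(c_n − c_{n−1})/n)·( Σ_{k=1}^{n−2} ((k−1)/n)·c_k + (n−3)(c_n + c_{n−1})/(2n) ); in particular, if c_n > c_{n−1} then f(c′) > f(c). -/
open Finset

/-- Partial sums of the sequence `c` (1-indexed): `partSum c k = c 1 + ⋯ + c k`. -/
noncomputable def partSum (c : ℕ → ℝ) (k : ℕ) : ℝ := ∑ i ∈ Finset.Icc 1 k, c i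

/-- The mean `S̄` of the partial sums `s_1, …, s_n`. -/
noncomputable def meanPS (n : ℕ) (c : ℕ → ℝ) : ℝ :=
  (1 / (n : ℝ)) * ∑ k ∈ Finset.Icc 1 n, partSum c k

/-- The variance `f(c)` of the partial sums `s_1, …, s_n`. -/
noncomputable def varPS (n : ℕ) (c : ℕ → ℝ) : ℝ :=
  (1 / (n : ℝ)) * ∑ k ∈ Finset.Icc 1 n, (partSum c k - meanPS n c) ^ 2

/-- The `(i,j)`-partial mean `μ_{ij}(S) = (1/(j-i)) ∑_{k=i}^{j-1} s_k`. -/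
noncomputable def partMean (c : ℕ → ℝ) (i j : ℕ) : ℝ :=
  (1 / ((j : ℝ) - (i : ℝ))) * ∑ k ∈ Finset.Icc i (j - 1), partSum c k

/-- The `(i,j)`-interchange of `c`: swap the entries in positions `i` and `j`. -/
noncomputable def swapSeq (c : ℕ → ℝ) (i j : ℕ) : ℕ → ℝ := fun k => c (Equiv.swap i j k)

/-- `c` is an arrangement (permutation) of `a` on the index range `1..n`. -/
def IsArrangement (n : ℕ) (a c : ℕ → ℝ) : Prop :=
  ∃ σ : ℕ → ℕ, Set.BijOn σ (Set.Icc 1 n) (Set.Icc 1 n) ∧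
    ∀ k ∈ Set.Icc 1 n, c k = a (σ k)

/-- The dual sequence `c^d = (c_1, c_n, c_{n-1}, …, c_2)`. -/
noncomputable def dualSeq (n : ℕ) (c : ℕ → ℝ) : ℕ → ℝ :=
  fun k => if 2 ≤ k then c (n + 2 - k) else c k

lemma sum_partSum (c : ℕ → ℝ) (n : ℕ) :
    ∑ k ∈ Finset.Icc 1 n, partSum c k
      = ∑ k ∈ Finset.Icc 1 n, ((n : ℝ) + 1 - (k : ℝ)) * c k := by
  induction n with
  | zero => simp
  | succ n ih =>
    rw [Finset.sum_Icc_succ_top (show 1 ≤ n+1 by omega), ih,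
        Finset.sum_Icc_succ_top (show 1 ≤ n+1 by omega)]
    push_cast
    have h : ∀ k ∈ Finset.Icc 1 n, ((n:ℝ) + 1 + 1 - (k:ℝ)) * c k
        = ((n:ℝ)+1-(k:ℝ))*c k + c k := by
      intro k hk; ring
    rw [Finset.sum_congr rfl h, Finset.sum_add_distrib]
    unfold partSum
    rw [Finset.sum_Icc_succ_top (show 1 ≤ n+1 by omega)]
    push_cast
    ring

lemma varPS_eq (n : ℕ) (hn : 0 < n) (c : ℕ → ℝ) :
    varPS n c = (1/(n:ℝ)) * ∑ k ∈ Finset.Icc 1 n, (partSum c k)^2 - (meanPS n c)^2 := by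
  have hN : (n:ℝ) ≠ 0 := by positivity
  have hs : ∑ k ∈ Finset.Icc 1 n, partSum c k = (n:ℝ) * meanPS n c := by
    unfold meanPS; field_simp
  unfold varPS
  have h : ∀ k ∈ Finset.Icc 1 n, (partSum c k - meanPS n c)^2
      = (partSum c k)^2 - 2 * meanPS n c * partSum c k + (meanPS n c)^2 := fun k _ => by ring
  rw [Finset.sum_congr rfl h, Finset.sum_add_distrib, Finset.sum_sub_distrib,
      ← Finset.mul_sum, hs, Finset.sum_const, Nat.card_Icc]
  simp only [Nat.add_sub_cancel, nsmul_eq_mul]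
  field_simp
  ring


/-- explicit value of the change of the objective under the (n-1,n)-interchange. -/
theorem varPS_swap_last_diff (n : ℕ) (hn : 3 < n) (c : ℕ → ℝ)
    (hc : ∀ k, 1 ≤ k → k ≤ n → 0 < c k) :
    varPS n (swapSeq c (n - 1) n) - varPS n c =
      2 * (c n - c (n - 1)) / (n : ℝ) *
        ((∑ k ∈ Finset.Icc 1 (n - 2), ((k : ℝ) - 1) / (n : ℝ) * c k)
          + ((n : ℝ) - 3) * (c n + c (n - 1)) / (2 * (n : ℝ)))
    ∧ (c (n - 1) < c n → varPS n c < varPS n (swapSeq c (n - 1) n)) := by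
  obtain ⟨m, rfl⟩ : ∃ m, n = m + 4 := ⟨n - 4, by omega⟩
  have h1 : m + 4 - 1 = m + 3 := rfl
  have h2 : m + 4 - 2 = m + 2 := rfl
  rw [h1, h2]
  set c' := swapSeq c (m + 3) (m + 4) with hc'
  have hN : ((m:ℝ) + 4) ≠ 0 := by positivity
  have hNcast : ((m + 4 : ℕ) : ℝ) = (m:ℝ) + 4 := by push_cast; ring
  -- pointwise facts
  have hfix : ∀ k, k ≤ m + 2 → c' k = c k := by
    intro k hk
    simp only [hc', swapSeq]
    rw [Equiv.swap_apply_of_ne_of_ne (by omega) (by omega)]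
  have hw3 : c' (m + 3) = c (m + 4) := by
    simp only [hc', swapSeq, Equiv.swap_apply_left]
  have hc4 : c' (m + 4) = c (m + 3) := by
    simp only [hc', swapSeq, Equiv.swap_apply_right]
  -- partial sums
  have hps : ∀ k, k ≤ m + 2 → partSum c' k = partSum c k := by
    intro k hk
    unfold partSum
    refine Finset.sum_congr rfl fun i hi => ?_
    simp only [Finset.mem_Icc] at hi
    exact hfix i (by omega)
  set B := partSum c (m + 2) with hB
  have hs3' : partSum c' (m + 3) = B + c (m + 4) := by
    unfold partSum
    rw [Finset.sum_Icc_succ_top (show 1 ≤ m+3 by omega)]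
    rw [show ∑ i ∈ Finset.Icc 1 (m+2), c' i = partSum c' (m+2) from rfl, hps _ le_rfl, hw3]
  have hs3 : partSum c (m + 3) = B + c (m + 3) := by
    unfold partSum
    rw [Finset.sum_Icc_succ_top (show 1 ≤ m+3 by omega)]
    rfl
  have hs4' : partSum c' (m + 4) = partSum c (m + 4) := by
    unfold partSum
    rw [Finset.sum_Icc_succ_top (show 1 ≤ m+4 by omega),
        Finset.sum_Icc_succ_top (show 1 ≤ m+4 by omega),
        show ∑ i ∈ Finset.Icc 1 (m+3), c' i = partSum c' (m+3) from rfl,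
        show ∑ i ∈ Finset.Icc 1 (m+3), c i = partSum c (m+3) from rfl,
        hs3', hs3, hc4]
    ring
  -- sums A
  set A := ∑ k ∈ Finset.Icc 1 (m+2), ((k : ℝ) - 1) / ((m + 4 : ℕ) : ℝ) * c k with hA
  -- mean
  have hsplit : ∀ f : ℕ → ℝ, ∑ k ∈ Finset.Icc 1 (m+4), f k
      = (∑ k ∈ Finset.Icc 1 (m+2), f k) + f (m+3) + f (m+4) := by
    intro f
    rw [Finset.sum_Icc_succ_top (show 1 ≤ m+4 by omega),
        Finset.sum_Icc_succ_top (show 1 ≤ m+3 by omega)]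
  have hM : meanPS (m+4) c = B - A + (2 * c (m+3) + c (m+4)) / ((m:ℝ)+4) := by
    unfold meanPS
    rw [sum_partSum, hsplit]
    have hw : ∑ k ∈ Finset.Icc 1 (m+2), (((m+4:ℕ):ℝ) + 1 - (k:ℝ)) * c k
        = ((m:ℝ)+4) * B - ((m:ℝ)+4) * A := by
      rw [hA, hB]
      unfold partSum
      rw [Finset.mul_sum, Finset.mul_sum, ← Finset.sum_sub_distrib]
      refine Finset.sum_congr rfl fun k hk => ?_
      rw [hNcast]
      field_simp
      ring
    rw [hw, hNcast]
    push_cast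
    field_simp
    ring
  have hM' : meanPS (m+4) c' = meanPS (m+4) c + (c (m+4) - c (m+3)) / ((m:ℝ)+4) := by
    unfold meanPS
    rw [hsplit, hsplit, Finset.sum_congr rfl (fun k hk => by
      simp only [Finset.mem_Icc] at hk; exact hps k hk.2), hs3', hs3, hs4', hNcast]
    field_simp
    ring
  -- variance difference
  have hvar : varPS (m+4) c' - varPS (m+4) c =
      (1/((m:ℝ)+4)) * ((B + c (m+4))^2 - (B + c (m+3))^2)
        - ((meanPS (m+4) c')^2 - (meanPS (m+4) c)^2) := by
    rw [varPS_eq _ (by omega) c', varPS_eq _ (by omega) c, hsplit, hsplit,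
        Finset.sum_congr rfl (fun k hk => by
          simp only [Finset.mem_Icc] at hk; rw [hps k hk.2]),
        hs3', hs3, hs4', hNcast]
    ring
  have key : varPS (m+4) c' - varPS (m+4) c =
      2 * (c (m+4) - c (m+3)) / (((m+4:ℕ)):ℝ) *
        (A + (((m+4:ℕ):ℝ) - 3) * (c (m+4) + c (m+3)) / (2 * ((m+4:ℕ):ℝ))) := by
    rw [hvar, hM', hM, hNcast]
    field_simp
    ring
  refine ⟨key, fun hlt => ?_⟩
  have hApos : 0 ≤ A := by
    refine Finset.sum_nonneg fun k hk => ?_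
    simp only [Finset.mem_Icc] at hk
    have : 0 < c k := hc k hk.1 (by omega)
    have hk1 : (1:ℝ) ≤ (k:ℝ) := by exact_mod_cast hk.1
    have : 0 ≤ ((k:ℝ) - 1) / ((m + 4 : ℕ) : ℝ) := by
      apply div_nonneg <;> [linarith; positivity]
    positivity
  have hc3 : 0 < c (m+3) := hc _ (by omega) (by omega)
  have hc4p : 0 < c (m+4) := hc _ (by omega) (by omega)
  have hbr : 0 < A + (((m+4:ℕ):ℝ) - 3) * (c (m+4) + c (m+3)) / (2 * ((m+4:ℕ):ℝ)) := by
    rw [hNcast]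
    have : 0 < ((m:ℝ)+4-3) * (c (m+4) + c (m+3)) / (2 * ((m:ℝ)+4)) := by
      apply div_pos
      · apply mul_pos (by linarith) (by linarith)
      · positivity
    linarith
  have hd : 0 < 2 * (c (m+4) - c (m+3)) / (((m+4:ℕ)):ℝ) := by
    rw [hNcast]; apply div_pos (by linarith) (by linarith)
  nlinarith [mul_pos hd hbr, key]
end

section
/- (Lemma 2) There exist at least two kinds of optimal arrangements of A: there exists an optimal arrangement c with c_1 = a_1 and c_2 = a_2, and there exists an optimal arrangement c′ with c′_1 = a_1 and c′_n = a_2. -/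
open Finset

/-!
Swapping the entries in positions `i < j` adds `d = c_j - c_i` to the partial sums
`s_i, …, s_{j-1}` and changes `n² f` by `2 n d ∑_{i ≤ k < j} (s_k - S̄) + (j - i)(n - j + i) d²`.
At an optimum this is `≤ 0`, so `d ∑_{i ≤ k < j} (s_k - S̄) < 0`. Since the partial sums of a
positive sequence increase, a block of deviations `s_k - S̄` with positive sum cannot precede one
with negative sum. Applied to the swaps `(1, p)` with `c_p = a_1`, and `(2, q)`, `(q, n)` with
`c_q = a_2`, this forces `c_1 = a_1` and `a_2 ∈ {c_2, c_n}`. The dual sequence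
`(c_1, c_n, …, c_2)` has the reflected partial sums `s_1 + s_n - s_{n+1-k}`, hence the same
variance, and it exchanges the two cases.
-/
lemma partSum_succ (c : ℕ → ℝ) (k : ℕ) : partSum c (k + 1) = partSum c k + c (k + 1) :=
  sum_Icc_succ_top (Nat.le_add_left 1 k) c

lemma partSum_monotoneOn {n : ℕ} {c : ℕ → ℝ} (hc : ∀ k ∈ Icc 1 n, 0 ≤ c k) :
    MonotoneOn (partSum c) (Set.Iic n) :=
  monotoneOn_of_le_add_one Set.ordConnected_Iic fun k _ _ hk => by
    rw [partSum_succ]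
    linarith [hc (k + 1) (mem_Icc.2 ⟨by omega, hk⟩)]

lemma varPS_congr {n : ℕ} {c c' : ℕ → ℝ} (h : ∀ k ∈ Icc 1 n, c k = c' k) :
    varPS n c = varPS n c' := by
  have hs : ∀ k ∈ Icc 1 n, partSum c k = partSum c' k := fun k hk =>
    sum_congr rfl fun i hi =>
      h i (mem_Icc.2 ⟨(mem_Icc.1 hi).1, (mem_Icc.1 hi).2.trans (mem_Icc.1 hk).2⟩)
  have hm : meanPS n c = meanPS n c' := by rw [meanPS, meanPS, sum_congr rfl hs]
  rw [varPS, varPS, hm, sum_congr rfl fun k hk => by rw [hs k hk]]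

lemma sum_partSum_eq_mul_meanPS (n : ℕ) (c : ℕ → ℝ) :
    ∑ k ∈ Icc 1 n, partSum c k = n * meanPS n c := by
  rcases eq_or_ne n 0 with rfl | hn
  · simp
  rw [meanPS]
  field_simp

lemma sum_partSum_sub_meanPS (n : ℕ) (c : ℕ → ℝ) :
    ∑ k ∈ Icc 1 n, (partSum c k - meanPS n c) = 0 := by
  simp [sum_sub_distrib, sum_partSum_eq_mul_meanPS]

lemma meanPS_of_partSum_eq_add {n : ℕ} {c c' e : ℕ → ℝ}
    (h : ∀ k ∈ Icc 1 n, partSum c' k = partSum c k + e k) :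
    meanPS n c' = meanPS n c + (∑ k ∈ Icc 1 n, e k) / n := by
  rw [meanPS, meanPS, sum_congr rfl h, sum_add_distrib]
  ring

lemma sum_Ico_partSum_sub_meanPS_nonpos_of_neg {n : ℕ} {c : ℕ → ℝ}
    (hc : ∀ k ∈ Icc 1 n, 0 ≤ c k) {p q r : ℕ} (hr : r ≤ n + 1)
    (h : ∑ k ∈ Ico q r, (partSum c k - meanPS n c) < 0) :
    ∑ k ∈ Ico p q, (partSum c k - meanPS n c) ≤ 0 := by
  rw [sum_sub_distrib, sub_neg] at h
  obtain ⟨l, hl, hlt⟩ := exists_lt_of_sum_lt h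
  rw [mem_Ico] at hl
  refine sum_nonpos fun k hk => ?_
  rw [mem_Ico] at hk
  have := partSum_monotoneOn hc (a := k) (b := l) (by simp; omega) (by simp; omega) (by omega)
  linarith

lemma varPS_of_partSum_eq_add {n : ℕ} {c c' e : ℕ → ℝ}
    (h : ∀ k ∈ Icc 1 n, partSum c' k = partSum c k + e k) :
    varPS n c' = varPS n c +
      (2 * ∑ k ∈ Icc 1 n, e k * (partSum c k - meanPS n c) + ∑ k ∈ Icc 1 n, e k ^ 2
        - (∑ k ∈ Icc 1 n, e k) ^ 2 / n) / n := by
  set E := ∑ k ∈ Icc 1 n, e k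
  have hsq : ∀ k ∈ Icc 1 n, (partSum c' k - meanPS n c') ^ 2 =
      (partSum c k - meanPS n c) ^ 2 + 2 * (e k * (partSum c k - meanPS n c)) + e k ^ 2
        - 2 * (E / n) * (partSum c k - meanPS n c) - 2 * (E / n) * e k + (E / n) ^ 2 := by
    intro k hk
    rw [h k hk, meanPS_of_partSum_eq_add h]
    ring
  rw [varPS, varPS, sum_congr rfl hsq]
  simp only [sum_add_distrib, sum_sub_distrib, ← mul_sum, sum_const, Nat.card_Icc,
    sum_partSum_eq_mul_meanPS, nsmul_eq_mul]
  rcases eq_or_ne n 0 with rfl | hn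
  · simp
  field_simp
  push_cast
  ring

lemma partSum_swapSeq (c : ℕ → ℝ) {i j : ℕ} (hi : 1 ≤ i) (hij : i < j) (k : ℕ) :
    partSum (swapSeq c i j) k = partSum c k + if k ∈ Ico i j then c j - c i else 0 := by
  induction k with
  | zero => simp [partSum, show ¬i ≤ 0 by omega]
  | succ k ih =>
    rw [partSum_succ, partSum_succ, ih]
    simp only [swapSeq, Equiv.swap_apply_def, mem_Ico]
    split_ifs <;> subst_vars <;> first | omega | ring

lemma varPS_swapSeq (c : ℕ → ℝ) {n i j : ℕ} (hi : 1 ≤ i) (hij : i < j) (hjn : j ≤ n) :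
    varPS n (swapSeq c i j) = varPS n c +
      (2 * (c j - c i) * ∑ k ∈ Ico i j, (partSum c k - meanPS n c)
        + (j - i : ℕ) * (n - (j - i : ℕ)) / n * (c j - c i) ^ 2) / n := by
  have hsub : Ico i j ⊆ Icc 1 n := fun k hk => by
    simp only [mem_Ico, mem_Icc] at hk ⊢; omega
  have hind : ∀ g : ℕ → ℝ,
      ∑ k ∈ Icc 1 n, (if k ∈ Ico i j then g k else 0) = ∑ k ∈ Ico i j, g k := fun g => by
    rw [sum_ite_mem, inter_eq_right.2 hsub]
  rw [varPS_of_partSum_eq_add fun k _ => partSum_swapSeq c hi hij k]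
  simp only [ite_mul, zero_mul, ite_pow, ne_eq, OfNat.ofNat_ne_zero, not_false_eq_true,
    zero_pow, hind, sum_const, Nat.card_Ico, nsmul_eq_mul, ← mul_sum]
  have hn : (n : ℝ) ≠ 0 := Nat.cast_ne_zero.2 (by omega)
  field_simp
  ring

lemma sum_Icc_one_reflect {M : Type*} [AddCommMonoid M] (n : ℕ) (f : ℕ → M) :
    ∑ k ∈ Icc 1 n, f (n + 1 - k) = ∑ k ∈ Icc 1 n, f k :=
  sum_nbij' (n + 1 - ·) (n + 1 - ·) (by simp; omega) (by simp; omega) (by simp; omega)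
    (by simp; omega) fun _ _ => rfl

lemma varPS_of_partSum_eq_sub_reflect {n : ℕ} {c c' : ℕ → ℝ} (C : ℝ)
    (h : ∀ k ∈ Icc 1 n, partSum c' k = C - partSum c (n + 1 - k)) :
    varPS n c' = varPS n c := by
  rcases eq_or_ne n 0 with rfl | hn
  · simp [varPS]
  have hmean : meanPS n c' = C - meanPS n c := by
    rw [meanPS, meanPS, sum_congr rfl h, sum_sub_distrib,
      sum_Icc_one_reflect n (partSum c), sum_const, Nat.card_Icc, nsmul_eq_mul]
    field_simp
    simp
  rw [varPS, varPS, ← sum_Icc_one_reflect n fun k => (partSum c k - meanPS n c) ^ 2]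
  congr 1
  refine sum_congr rfl fun k hk => ?_
  rw [h k hk, hmean]
  ring

lemma partSum_dualSeq {n : ℕ} (c : ℕ → ℝ) {k : ℕ} (hk : 1 ≤ k) (hkn : k ≤ n) :
    partSum (dualSeq n c) k = partSum c 1 + partSum c n - partSum c (n + 1 - k) := by
  induction k, hk using Nat.le_induction with
  | base => simp [partSum, dualSeq]
  | succ k hk ih =>
    have hnk : n + 1 - k = n + 1 - (k + 1) + 1 := by omega
    rw [partSum_succ (dualSeq n c), ih (by omega), hnk, partSum_succ c (n + 1 - (k + 1)),
      dualSeq, if_pos (by omega), show n + 2 - (k + 1) = n + 1 - (k + 1) + 1 by omega]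
    ring

lemma isArrangement_self (n : ℕ) (a : ℕ → ℝ) : IsArrangement n a a :=
  ⟨id, Set.bijOn_id _, fun _ _ => rfl⟩

namespace IsArrangement

variable {n : ℕ} {a c : ℕ → ℝ}

lemma comp (hc : IsArrangement n a c) {τ : ℕ → ℕ}
    (hτ : Set.BijOn τ (Set.Icc 1 n) (Set.Icc 1 n)) : IsArrangement n a (c ∘ τ) := by
  obtain ⟨σ, hσ, hcσ⟩ := hc
  exact ⟨σ ∘ τ, hσ.comp hτ, fun k hk => hcσ _ (hτ.mapsTo hk)⟩

lemma swapSeq (hc : IsArrangement n a c) {i j : ℕ} (hi : i ∈ Set.Icc 1 n)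
    (hj : j ∈ Set.Icc 1 n) : IsArrangement n a (swapSeq c i j) := by
  have hmaps : Set.MapsTo (Equiv.swap i j) (Set.Icc 1 n) (Set.Icc 1 n) := fun k hk => by
    rw [Equiv.swap_apply_def]
    split_ifs <;> assumption
  have hinv : Set.InvOn (Equiv.swap i j) (Equiv.swap i j) (Set.Icc 1 n) (Set.Icc 1 n) :=
    ⟨fun k _ => Equiv.swap_apply_self i j k, fun k _ => Equiv.swap_apply_self i j k⟩
  exact hc.comp (hinv.bijOn hmaps hmaps)

lemma dualSeq (hc : IsArrangement n a c) : IsArrangement n a (dualSeq n c) := by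
  set τ : ℕ → ℕ := fun k => if 2 ≤ k then n + 2 - k else k
  have hmaps : Set.MapsTo τ (Set.Icc 1 n) (Set.Icc 1 n) := fun k hk => by
    simp only [τ, Set.mem_Icc] at hk ⊢
    split_ifs <;> omega
  have hinv : Set.InvOn τ τ (Set.Icc 1 n) (Set.Icc 1 n) := by
    refine ⟨fun k hk => ?_, fun k hk => ?_⟩ <;>
    · simp only [τ, Set.mem_Icc] at hk ⊢
      split_ifs <;> omega
  have hdual : _root_.dualSeq n c = c ∘ τ := funext fun k => by
    simp only [_root_.dualSeq, τ, Function.comp_apply, apply_ite c]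
  exact hdual ▸ hc.comp (hinv.bijOn hmaps hmaps)

lemma injOn (hc : IsArrangement n a c) (ha : StrictMonoOn a (Set.Icc 1 n)) :
    Set.InjOn c (Set.Icc 1 n) := by
  obtain ⟨σ, hσ, hcσ⟩ := hc
  exact (ha.injOn.comp hσ.injOn hσ.mapsTo).congr fun k hk => (hcσ k hk).symm

lemma exists_eq (hc : IsArrangement n a c) {t : ℕ} (ht : t ∈ Set.Icc 1 n) :
    ∃ k ∈ Set.Icc 1 n, c k = a t := by
  obtain ⟨σ, hσ, hcσ⟩ := hc
  obtain ⟨k, hk, rfl⟩ := hσ.surjOn ht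
  exact ⟨k, hk, hcσ k hk⟩

lemma lt_apply_of_forall_ne (hc : IsArrangement n a c) (ha : StrictMonoOn a (Set.Icc 1 n))
    {k t : ℕ} (hk : k ∈ Set.Icc 1 n) (ht : t ∈ Set.Icc 1 n) (hne : ∀ s ∈ Set.Icc 1 t, c k ≠ a s) :
    a t < c k := by
  obtain ⟨σ, hσ, hcσ⟩ := hc
  have hσk := hσ.mapsTo hk
  have htσ : t < σ k := by
    by_contra! h
    exact hne (σ k) ⟨hσk.1, h⟩ (hcσ k hk)
  exact (hcσ k hk).symm ▸ ha ht hσk htσ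

lemma nonneg (hc : IsArrangement n a c) (ha : StrictMonoOn a (Set.Icc 1 n)) (ha1 : 0 ≤ a 1) :
    ∀ k ∈ Icc 1 n, 0 ≤ c k := by
  obtain ⟨σ, hσ, hcσ⟩ := hc
  intro k hk
  have hk' : k ∈ Set.Icc 1 n := by simpa using hk
  have hσk := hσ.mapsTo hk'
  rw [hcσ k hk']
  exact ha1.trans (ha.monotoneOn ⟨le_rfl, hσk.1.trans hσk.2⟩ hσk hσk.1)

end IsArrangement

def IsOptimal (n : ℕ) (a c : ℕ → ℝ) : Prop :=
  IsArrangement n a c ∧ ∀ c'', IsArrangement n a c'' → varPS n c'' ≤ varPS n c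

lemma finite_setOf_varPS (n : ℕ) (a : ℕ → ℝ) :
    {v | ∃ c, IsArrangement n a c ∧ varPS n c = v}.Finite := by
  refine (Set.finite_range fun τ : Fin (n + 1) → Fin (n + 1) =>
    varPS n fun k => a (τ (Fin.ofNat (n + 1) k))).subset ?_
  rintro _ ⟨c, ⟨σ, hσ, hcσ⟩, rfl⟩
  refine ⟨fun x => Fin.ofNat (n + 1) (σ x), varPS_congr fun k hk => ?_⟩
  have hk' : k ∈ Set.Icc 1 n := by simpa using hk
  have hσk := hσ.mapsTo hk'
  simp only [Fin.val_ofNat, Nat.mod_eq_of_lt (Nat.lt_succ_of_le hk'.2),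
    Nat.mod_eq_of_lt (Nat.lt_succ_of_le hσk.2), hcσ k hk']

lemma exists_isOptimal (n : ℕ) (a : ℕ → ℝ) : ∃ c, IsOptimal n a c := by
  obtain ⟨_, ⟨c, hc, rfl⟩, hmax⟩ := Set.exists_max_image _ id (finite_setOf_varPS n a)
    ⟨_, a, isArrangement_self n a, rfl⟩
  exact ⟨c, hc, fun c'' hc'' => hmax _ ⟨c'', hc'', rfl⟩⟩

namespace IsOptimal

variable {n : ℕ} {a c : ℕ → ℝ}

lemma dualSeq (hc : IsOptimal n a c) : IsOptimal n a (dualSeq n c) := by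
  refine ⟨hc.1.dualSeq, fun c'' hc'' => ?_⟩
  rw [varPS_of_partSum_eq_sub_reflect (partSum c 1 + partSum c n)
    fun k hk => partSum_dualSeq c (mem_Icc.1 hk).1 (mem_Icc.1 hk).2]
  exact hc.2 c'' hc''

lemma mul_sum_Ico_sub_meanPS_neg (hc : IsOptimal n a c) {i j : ℕ} (hi : 1 ≤ i) (hij : i < j)
    (hjn : j ≤ n) (hne : c i ≠ c j) :
    (c j - c i) * ∑ k ∈ Ico i j, (partSum c k - meanPS n c) < 0 := by
  have hle := hc.2 _ (hc.1.swapSeq ⟨hi, by omega⟩ ⟨by omega, hjn⟩)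
  rw [varPS_swapSeq c hi hij hjn] at hle
  have hn : (0 : ℝ) < n := by exact_mod_cast (show 0 < n by omega)
  have hgain : 0 < (j - i : ℕ) * (n - (j - i : ℕ)) / n * (c j - c i) ^ 2 := by
    have hlen : (0 : ℝ) < (j - i : ℕ) := by exact_mod_cast (show 0 < j - i by omega)
    have hlen' : (0 : ℝ) < n - (j - i : ℕ) :=
      sub_pos.2 (by exact_mod_cast (show j - i < n by omega))
    have hd : c j - c i ≠ 0 := sub_ne_zero.2 hne.symm
    positivity
  have hX := (div_le_iff₀ hn).1 ((add_le_iff_nonpos_right _).1 hle)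
  linarith

lemma apply_one (hc : IsOptimal n a c) (ha : StrictMonoOn a (Set.Icc 1 n)) (ha1 : 0 ≤ a 1)
    (hn : 1 ≤ n) : c 1 = a 1 := by
  obtain ⟨p, ⟨hp, hpn⟩, hcp⟩ := hc.1.exists_eq ⟨le_rfl, hn⟩
  by_contra hne
  have hlt : c p < c 1 := hcp ▸ hc.1.lt_apply_of_forall_ne ha ⟨le_rfl, hn⟩ ⟨le_rfl, hn⟩
    fun s ⟨_, hs⟩ => (show s = 1 by omega) ▸ hne
  have hp1 : 1 < p := lt_of_le_of_ne hp (by rintro rfl; exact lt_irrefl _ hlt)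
  have hhead : 0 < ∑ k ∈ Ico 1 p, (partSum c k - meanPS n c) :=
    pos_of_mul_neg_right (hc.mul_sum_Ico_sub_meanPS_neg le_rfl hp1 hpn hlt.ne') (by linarith)
  have htail : ∑ k ∈ Ico p (n + 1), (partSum c k - meanPS n c) < 0 := by
    have htotal := sum_partSum_sub_meanPS n c
    rw [← Ico_add_one_right_eq_Icc, ← sum_Ico_consecutive _ hp (by omega : p ≤ n + 1)] at htotal
    linarith
  exact (sum_Ico_partSum_sub_meanPS_nonpos_of_neg (hc.1.nonneg ha ha1) le_rfl htail).not_gt hhead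

lemma apply_two_or_apply_last (hc : IsOptimal n a c) (ha : StrictMonoOn a (Set.Icc 1 n))
    (ha1 : 0 ≤ a 1) (hn : 3 ≤ n) : c 2 = a 2 ∨ c n = a 2 := by
  have hc1 := hc.apply_one ha ha1 (by omega)
  obtain ⟨q, ⟨hq, hqn⟩, hcq⟩ := hc.1.exists_eq (t := 2) ⟨one_le_two, by omega⟩
  by_contra! hne
  have hq1 : q ≠ 1 := by
    rintro rfl
    exact (ha ⟨le_rfl, by omega⟩ ⟨one_le_two, by omega⟩ one_lt_two).ne (hc1.symm.trans hcq)
  have hq2 : q ≠ 2 := by rintro rfl; exact hne.1 hcq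
  have hqn' : q ≠ n := by rintro rfl; exact hne.2 hcq
  have hgt : ∀ k ∈ Set.Icc 1 n, k ≠ 1 → k ≠ q → c q < c k := fun k hk hk1 hkq =>
    hcq ▸ hc.1.lt_apply_of_forall_ne ha hk ⟨one_le_two, by omega⟩ fun s ⟨hs1, hs2⟩ h => by
      obtain rfl | rfl : s = 1 ∨ s = 2 := by omega
      · exact hk1 (hc.1.injOn ha hk ⟨le_rfl, by omega⟩ (h.trans hc1.symm))
      · exact hkq (hc.1.injOn ha hk ⟨hq, hqn⟩ (h.trans hcq.symm))
  have h2 := hgt 2 ⟨one_le_two, by omega⟩ (by omega) (Ne.symm hq2)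
  have hlast := hgt n ⟨by omega, le_rfl⟩ (by omega) (Ne.symm hqn')
  have hhead : 0 < ∑ k ∈ Ico 2 q, (partSum c k - meanPS n c) := pos_of_mul_neg_right
    (hc.mul_sum_Ico_sub_meanPS_neg one_le_two (by omega) hqn h2.ne') (by linarith)
  have htail : ∑ k ∈ Ico q n, (partSum c k - meanPS n c) < 0 := neg_of_mul_neg_right
    (hc.mul_sum_Ico_sub_meanPS_neg hq (by omega) le_rfl hlast.ne) (by linarith)
  exact (sum_Ico_partSum_sub_meanPS_nonpos_of_neg (hc.1.nonneg ha ha1) (by omega) htail).not_gt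
    hhead

end IsOptimal

/-- Lemma 2: there exist optimal arrangements of both kinds. -/
theorem exists_two_kinds_of_optimal (n : ℕ) (hn : 3 < n) (a : ℕ → ℝ)
    (ha1 : 0 < a 1) (ha : ∀ i j, 1 ≤ i → i < j → j ≤ n → a i < a j) :
    (∃ c : ℕ → ℝ, IsArrangement n a c ∧
      (∀ c'', IsArrangement n a c'' → varPS n c'' ≤ varPS n c) ∧
      c 1 = a 1 ∧ c 2 = a 2) ∧
    (∃ c' : ℕ → ℝ, IsArrangement n a c' ∧
      (∀ c'', IsArrangement n a c'' → varPS n c'' ≤ varPS n c') ∧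
      c' 1 = a 1 ∧ c' n = a 2) := by
  have ha' : StrictMonoOn a (Set.Icc 1 n) := fun i hi j hj hij => ha i j hi.1 hij hj.2
  obtain ⟨c, hc⟩ := exists_isOptimal n a
  have hd := hc.dualSeq
  have h1 := hc.apply_one ha' ha1.le (by omega)
  have hd1 : dualSeq n c 1 = c 1 := rfl
  have hd2 : dualSeq n c 2 = c n := by simp [dualSeq]
  have hdn : dualSeq n c n = c 2 := by rw [dualSeq, if_pos (by omega), Nat.add_sub_cancel_left]
  rcases hc.apply_two_or_apply_last ha' ha1.le (by omega) with h2 | h2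
  · exact ⟨⟨c, hc.1, hc.2, h1, h2⟩, ⟨dualSeq n c, hd.1, hd.2, hd1.trans h1, hdn.trans h2⟩⟩
  · exact ⟨⟨dualSeq n c, hd.1, hd.2, hd1.trans h1, hd2.trans h2⟩, ⟨c, hc.1, hc.2, h1, h2⟩⟩
end
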